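/- arXiv:2604.25606 — 4 statements merged into one kernel-verified Lean document; each statement's English description precedes it below -/
import Mathlib

section
/- Let A be a real n×n symmetric matrix satisfying the Cordès-type bound (tr(A))²/tr(A²) ≥ n − 1 + ε for some ε ∈ (0,1], and let λ = tr(A)/tr(A²). Then ‖I − λA‖_F² ≤ 1 − ε. -/
/-- Squared Frobenius norm of a real matrix. -/
def frobSq {n : ℕ} (A : Matrix (Fin n) (Fin n) ℝ) : ℝ :=
  ∑ i, ∑ j, (A i j) ^ 2

/-- If a real symmetric matrix `A` satisfies the Cordès-type bound
`(tr A)²/tr(A²) ≥ n − 1 + ε` with `ε ∈ (0,1]`, then with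
`λ = tr(A)/tr(A²)` one has `‖I − λA‖_F² ≤ 1 − ε`. -/
theorem stmt1 {n : ℕ} (A : Matrix (Fin n) (Fin n) ℝ) (hA : A.IsSymm)
    (ε : ℝ) (hε : 0 < ε) (hε1 : ε ≤ 1)
    (hA2 : 0 < (A * A).trace)
    (hcordes : A.trace ^ 2 / (A * A).trace ≥ n - 1 + ε) :
    frobSq (1 - (A.trace / (A * A).trace) • A) ≤ 1 - ε := by
  classical
  set t := A.trace with ht
  set s := (A * A).trace with hsdef
  set lam := t / s with hlam
  have hs : s = ∑ i, ∑ j, A i j ^ 2 := by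
    simp only [hsdef, Matrix.trace, Matrix.diag, Matrix.mul_apply, sq]
    exact Finset.sum_congr rfl fun i _ => Finset.sum_congr rfl fun j _ => by
      rw [hA.apply]
  have htr : t = ∑ i, A i i := rfl
  have hexp : frobSq (1 - lam • A) = n - 2 * lam * t + lam ^ 2 * s := by
    unfold frobSq
    simp only [Matrix.sub_apply, Matrix.smul_apply, Matrix.one_apply, smul_eq_mul]
    have : ∀ i j : Fin n, ((if i = j then (1:ℝ) else 0) - lam * A i j) ^ 2
        = (if i = j then (1:ℝ) else 0) - 2 * lam * (if i = j then A i j else 0)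
          + lam ^ 2 * A i j ^ 2 := by
      intro i j
      by_cases h : i = j <;> simp [h] <;> ring
    simp only [this, Finset.sum_add_distrib, Finset.sum_sub_distrib, Finset.sum_ite_eq,
      Finset.mem_univ, if_true, ← Finset.mul_sum, hs, htr]
    simp [mul_comm]
  rw [hexp]
  have hsne : s ≠ 0 := ne_of_gt hA2
  have hval : (n:ℝ) - 2 * lam * t + lam ^ 2 * s = n - t ^ 2 / s := by
    rw [hlam]; field_simp; ring
  rw [hval]
  linarith [hcordes]
end

section
/- Let A be a real n×n symmetric matrix satisfying (tr(A))² ≥ (n − 1 + ε)·tr(A²) for some ε ∈ (0,1] with tr(A²) > 0, let λ = tr(A)/tr(A²), and let H be any real n×n symmetric matrix. Then |tr(H) − λ(A : H)|² ≤ (1 − ε)·‖H‖_F². -/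
/-- Frobenius inner product `A : H = ∑ᵢⱼ Aᵢⱼ Hᵢⱼ` of two real matrices. -/
def frobInner {n : ℕ} (A H : Matrix (Fin n) (Fin n) ℝ) : ℝ :=
  ∑ i, ∑ j, A i j * H i j

lemma frobCS {n : ℕ} (B H : Matrix (Fin n) (Fin n) ℝ) :
    frobInner B H ^ 2 ≤ frobSq B * frobSq H := by
  have h := Finset.sum_mul_sq_le_sq_mul_sq (Finset.univ : Finset (Fin n × Fin n))
    (fun p => B p.1 p.2) (fun p => H p.1 p.2)
  simpa [frobInner, frobSq, Fintype.sum_prod_type] using h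

lemma frobSq_eq_trace {n : ℕ} (A : Matrix (Fin n) (Fin n) ℝ) (hA : A.IsSymm) :
    frobSq A = (A * A).trace := by
  simp only [frobSq, Matrix.trace, Matrix.diag, Matrix.mul_apply]
  refine Finset.sum_congr rfl fun i _ => Finset.sum_congr rfl fun j _ => ?_
  rw [hA.apply i j, sq]

/-- Pointwise contraction estimate: if the symmetric matrix `A` satisfies
`(tr A)² ≥ (n − 1 + ε) tr(A²)` with `tr(A²) > 0` and `ε ∈ (0,1]`, and
`λ = tr(A)/tr(A²)`, then for any symmetric `H`,
`|tr(H) − λ(A : H)|² ≤ (1 − ε) ‖H‖_F²`. -/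
theorem stmt3 {n : ℕ} (A H : Matrix (Fin n) (Fin n) ℝ)
    (hA : A.IsSymm) (hH : H.IsSymm)
    (ε : ℝ) (hε : 0 < ε) (hε1 : ε ≤ 1)
    (hA2 : 0 < (A * A).trace)
    (hcordes : A.trace ^ 2 ≥ (n - 1 + ε) * (A * A).trace) :
    |H.trace - (A.trace / (A * A).trace) * frobInner A H| ^ 2 ≤
      (1 - ε) * frobSq H := by
  set s := (A * A).trace with hs
  set L := A.trace / s with hL
  set B : Matrix (Fin n) (Fin n) ℝ := 1 - L • A with hB
  have key : H.trace - L * frobInner A H = frobInner B H := by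
    simp only [frobInner, hB, Matrix.sub_apply, Matrix.smul_apply, Matrix.one_apply,
      smul_eq_mul, sub_mul, ite_mul, one_mul, zero_mul, Finset.sum_sub_distrib,
      Finset.sum_ite_eq, Finset.mem_univ, if_true, Finset.mul_sum]
    rw [Matrix.trace]
    simp [Matrix.diag, mul_assoc]
  have hBsq : frobSq B ≤ 1 - ε := by
    have expand : frobSq B = n - 2 * L * A.trace + L ^ 2 * frobSq A := by
      have term : ∀ i j : Fin n, (B i j) ^ 2 =
          (if i = j then (1:ℝ) else 0) - 2 * L * (if i = j then A i j else 0)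
            + L ^ 2 * A i j ^ 2 := by
        intro i j
        simp only [hB, Matrix.sub_apply, Matrix.smul_apply, Matrix.one_apply, smul_eq_mul]
        split <;> ring
      simp only [frobSq, term, Finset.sum_add_distrib, Finset.sum_sub_distrib,
        Finset.sum_ite_eq, Finset.mem_univ, if_true, ← Finset.mul_sum]
      rw [Matrix.trace]
      simp [Matrix.diag, frobSq]
    have hfA : frobSq A = s := frobSq_eq_trace A hA
    have hns : s ≠ 0 := ne_of_gt hA2
    have expand' : frobSq B = n - A.trace ^ 2 / s := by
      rw [expand, hfA, hL]
      field_simp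
      ring
    rw [expand']
    have h1 : (n : ℝ) - 1 + ε ≤ A.trace ^ 2 / s := (le_div_iff₀ hA2).mpr hcordes
    linarith
  have hHsq : 0 ≤ frobSq H := Finset.sum_nonneg fun i _ =>
    Finset.sum_nonneg fun j _ => sq_nonneg _
  calc |H.trace - L * frobInner A H| ^ 2 = frobInner B H ^ 2 := by rw [sq_abs, key]
    _ ≤ frobSq B * frobSq H := frobCS B H
    _ ≤ (1 - ε) * frobSq H := mul_le_mul_of_nonneg_right hBsq hHsq
end

section
/- Let H be a real symmetric positive semidefinite d×d matrix with d ≥ 1. Then for every symmetric positive definite d×d matrix A with det(A) = 1, one has (det H)^{1/d} ≤ (1/d)·tr(A·H). -/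
/-!
With `B = √A`, the matrix `B H B` is positive semidefinite with determinant `det A · det H = det H`
and trace `tr (A H)`, so the claim is AM–GM applied to its (nonnegative) eigenvalues.
-/

open Matrix Finset
open scoped MatrixOrder

variable {n : Type*} [Fintype n] [DecidableEq n]

theorem Matrix.PosSemidef.det_rpow_inv_card_le_trace_div [Nonempty n] {M : Matrix n n ℝ}
    (hM : M.PosSemidef) :
    M.det ^ (Fintype.card n : ℝ)⁻¹ ≤ M.trace / Fintype.card n := by
  have := Real.geom_mean_le_arith_mean univ (fun _ ↦ 1) hM.isHermitian.eigenvalues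
    (fun _ _ ↦ zero_le_one) (by simp [Fintype.card_pos]) (fun i _ ↦ hM.eigenvalues_nonneg i)
  simpa [hM.isHermitian.det_eq_prod_eigenvalues, hM.isHermitian.trace_eq_sum_eigenvalues]
    using this

theorem Matrix.PosSemidef.det_mul_det_rpow_inv_card_le_trace_mul_div [Nonempty n]
    {A H : Matrix n n ℝ} (hA : A.PosSemidef) (hH : H.PosSemidef) :
    (A.det * H.det) ^ (Fintype.card n : ℝ)⁻¹ ≤ (A * H).trace / Fintype.card n := by
  set B := CFC.sqrt A
  have hB : B.IsHermitian := (CFC.sqrt_nonneg A).posSemidef.isHermitian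
  have hBB : B * B = A := CFC.sqrt_mul_sqrt_self A hA.nonneg
  have hBHB : (B * H * B).PosSemidef := by
    simpa only [hB.eq] using hH.conjTranspose_mul_mul_same B
  have hdet : (B * H * B).det = A.det * H.det := by
    rw [det_mul, det_mul, mul_right_comm, ← det_mul, hBB]
  have htrace : (B * H * B).trace = (A * H).trace := by
    rw [trace_mul_cycle, hBB]
  simpa only [hdet, htrace] using hBHB.det_rpow_inv_card_le_trace_div

/-- Easy direction of the Krylov reformulation: for a real symmetric positive
semidefinite `d×d` matrix `H` (`d ≥ 1`) and any symmetric positive definite `A`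
with `det A = 1`, one has `(det H)^{1/d} ≤ (1/d) tr(A H)`. -/
theorem stmt11 {d : ℕ} (hd : 1 ≤ d) (H A : Matrix (Fin d) (Fin d) ℝ)
    (hH : H.PosSemidef) (hA : A.PosDef) (hdet : A.det = 1) :
    H.det ^ ((1 : ℝ) / d) ≤ (1 / d : ℝ) * (A * H).trace := by
  have : Nonempty (Fin d) := Fin.pos_iff_nonempty.mp hd
  have := hA.posSemidef.det_mul_det_rpow_inv_card_le_trace_mul_div hH
  rw [hdet, one_mul, Fintype.card_fin] at this
  rwa [one_div, inv_mul_eq_div]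
end

section
/- Let u be a smooth compactly supported function on ℝⁿ and suppose the symmetric coefficient matrix field A(x) satisfies, at almost every x, (tr A(x))² ≥ (n − 1 + ε)·tr(A(x)²) with tr(A(x)²) > 0, for some fixed ε ∈ (0,1]. Set λ(x) = tr(A(x))/tr(A(x)²). Then ‖Δu − λ·(A : D²u)‖_{L²} ≤ √(1 − ε)·‖Δu‖_{L²}. -/
open MeasureTheory

noncomputable section

/-- Partial derivative in the `i`-th coordinate direction. -/
def pd {n : ℕ} (i : Fin n) (f : EuclideanSpace ℝ (Fin n) → ℝ) :
    EuclideanSpace ℝ (Fin n) → ℝ :=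
  fun x => fderiv ℝ f x (EuclideanSpace.single i 1)

namespace Stmt15Aux

variable {n : ℕ}

lemma pd_contDiff {f : EuclideanSpace ℝ (Fin n) → ℝ} (hf : ContDiff ℝ (⊤ : ℕ∞) f) (i : Fin n) :
    ContDiff ℝ (⊤ : ℕ∞) (pd i f) := by
  exact (hf.fderiv_right (m := (⊤ : ℕ∞)) (by simp)).clm_apply contDiff_const

lemma pd_hcs {f : EuclideanSpace ℝ (Fin n) → ℝ} (hf : HasCompactSupport f) (i : Fin n) :
    HasCompactSupport (pd i f) :=
  hf.fderiv_apply ℝ (EuclideanSpace.single i 1)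

lemma pd_comm {f : EuclideanSpace ℝ (Fin n) → ℝ} (hf : ContDiff ℝ (⊤ : ℕ∞) f) (i j : Fin n) :
    pd j (pd i f) = pd i (pd j f) := by
  funext x
  have hsymm : IsSymmSndFDerivAt ℝ f x :=
    (hf.contDiffAt).isSymmSndFDerivAt (by rw [minSmoothness_of_isRCLikeNormedField]; exact (WithTop.coe_le_coe.2 (le_top : (2 : ℕ∞) ≤ ⊤) : ((2 : ℕ∞) : WithTop ℕ∞) ≤ ((⊤ : ℕ∞) : WithTop ℕ∞)))
  have hdiff : DifferentiableAt ℝ (fderiv ℝ f) x :=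
    ((hf.fderiv_right (m := (⊤ : ℕ∞)) (by simp)).differentiable (by simp)) x
  have key : ∀ v w : EuclideanSpace ℝ (Fin n),
      fderiv ℝ (fun y => fderiv ℝ f y v) x w = fderiv ℝ (fderiv ℝ f) x w v := by
    intro v w
    rw [fderiv_clm_apply hdiff (differentiableAt_const v)]
    simp
  show fderiv ℝ (fun y => fderiv ℝ f y (EuclideanSpace.single i 1)) x (EuclideanSpace.single j 1)
      = fderiv ℝ (fun y => fderiv ℝ f y (EuclideanSpace.single j 1)) x (EuclideanSpace.single i 1)
  rw [key, key, hsymm.eq]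

lemma ibp {f g : EuclideanSpace ℝ (Fin n) → ℝ}
    (hf : ContDiff ℝ (⊤ : ℕ∞) f) (hfs : HasCompactSupport f)
    (hg : ContDiff ℝ (⊤ : ℕ∞) g) (hgs : HasCompactSupport g) (i : Fin n) :
    ∫ x, f x * pd i g x ∂volume = - ∫ x, pd i f x * g x ∂volume := by
  simp only [pd]
  apply integral_mul_fderiv_eq_neg_fderiv_mul_of_integrable
  · exact (((pd_contDiff hf i).continuous).mul hg.continuous).integrable_of_hasCompactSupport
      ((pd_hcs hfs i).mul_right)
  · exact ((hf.continuous).mul (pd_contDiff hg i).continuous).integrable_of_hasCompactSupport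
      (hfs.mul_right)
  · exact ((hf.continuous).mul hg.continuous).integrable_of_hasCompactSupport (hfs.mul_right)
  · exact fun x _ => hf.differentiable (by simp) x
  · exact fun x _ => hg.differentiable (by simp) x

/-- `∫ ∂ᵢ∂ᵢu ∂ⱼ∂ⱼu = ∫ (∂ⱼ∂ᵢu)²`. -/
lemma cross_term (u : EuclideanSpace ℝ (Fin n) → ℝ)
    (hu : ContDiff ℝ (⊤ : ℕ∞) u) (hs : HasCompactSupport u) (i j : Fin n) :
    ∫ x, pd i (pd i u) x * pd j (pd j u) x ∂volume
      = ∫ x, pd j (pd i u) x * pd j (pd i u) x ∂volume := by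
  have hCi := pd_contDiff hu i
  have hSi := pd_hcs hs i
  have hCj := pd_contDiff hu j
  have hSj := pd_hcs hs j
  have h1 : ∫ x, pd i (pd i u) x * pd j (pd j u) x ∂volume
      = - ∫ x, pd j (pd i (pd i u)) x * pd j u x ∂volume :=
    ibp (pd_contDiff hCi i) (pd_hcs hSi i) hCj hSj j
  have h2 : pd j (pd i (pd i u)) = pd i (pd j (pd i u)) := pd_comm hCi i j
  have h3 : ∫ x, pd j (pd i u) x * pd i (pd j u) x ∂volume
      = - ∫ x, pd i (pd j (pd i u)) x * pd j u x ∂volume :=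
    ibp (pd_contDiff hCi j) (pd_hcs hSi j) hCj hSj i
  have h4 : pd i (pd j u) = pd j (pd i u) := pd_comm hu j i
  rw [h1, h2, ← h3, h4]

lemma hessian_identity (u : EuclideanSpace ℝ (Fin n) → ℝ)
    (hu : ContDiff ℝ (⊤ : ℕ∞) u) (hs : HasCompactSupport u) :
    ∫ x, (∑ i, pd i (pd i u) x) ^ 2 ∂volume
      = ∫ x, ∑ i, ∑ j, (pd j (pd i u) x) ^ 2 ∂volume := by
  have hint : ∀ i j : Fin n,
      Integrable (fun x => pd i (pd i u) x * pd j (pd j u) x) volume := fun i j =>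
    (((pd_contDiff (pd_contDiff hu i) i).continuous).mul
        (pd_contDiff (pd_contDiff hu j) j).continuous).integrable_of_hasCompactSupport
      ((pd_hcs (pd_hcs hs i) i).mul_right)
  have hint2 : ∀ i j : Fin n,
      Integrable (fun x => (pd j (pd i u) x) ^ 2) volume := fun i j => by
    simp only [sq]; exact
      (((pd_contDiff (pd_contDiff hu i) j).continuous).mul
          (pd_contDiff (pd_contDiff hu i) j).continuous).integrable_of_hasCompactSupport
        ((pd_hcs (pd_hcs hs i) j).mul_right)
  calc ∫ x, (∑ i, pd i (pd i u) x) ^ 2 ∂volume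
      = ∫ x, ∑ i, ∑ j, pd i (pd i u) x * pd j (pd j u) x ∂volume := by
        congr 1; funext x
        rw [sq, Finset.sum_mul_sum]
    _ = ∑ i, ∑ j, ∫ x, pd i (pd i u) x * pd j (pd j u) x ∂volume := by
        rw [integral_finset_sum _ fun i _ => integrable_finset_sum _ fun j _ => hint i j]
        exact Finset.sum_congr rfl fun i _ => integral_finset_sum _ fun j _ => hint i j
    _ = ∑ i, ∑ j, ∫ x, (pd j (pd i u) x) ^ 2 ∂volume := by
        refine Finset.sum_congr rfl fun i _ => Finset.sum_congr rfl fun j _ => ?_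
        simpa [sq] using cross_term u hu hs i j
    _ = ∫ x, ∑ i, ∑ j, (pd j (pd i u) x) ^ 2 ∂volume := by
        rw [integral_finset_sum _ fun i _ => integrable_finset_sum _ fun j _ => hint2 i j]
        exact Finset.sum_congr rfl fun i _ => (integral_finset_sum _ fun j _ => hint2 i j).symm

lemma pointwise_bound (a : Matrix (Fin n) (Fin n) ℝ) (h : Fin n → Fin n → ℝ) (ε l : ℝ)
    (hsym : a.IsSymm) (hc : a.trace ^ 2 ≥ ((n : ℝ) - 1 + ε) * (a * a).trace)
    (ht : 0 < (a * a).trace) (hl : l = a.trace / (a * a).trace) :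
    ((∑ i, h i i) - l * ∑ i, ∑ j, a i j * h i j) ^ 2
      ≤ (1 - ε) * ∑ i, ∑ j, (h i j) ^ 2 := by
  classical
  set s : ℝ := a.trace with hs
  set t : ℝ := (a * a).trace with htdef
  have htrace : s = ∑ i, a i i := by simp [hs, Matrix.trace, Matrix.diag]
  have ht2 : t = ∑ i, ∑ j, a i j * a j i := by
    simp [htdef, Matrix.trace, Matrix.mul_apply, Matrix.diag]
  have hsq : ∀ i j, a i j * a j i = a i j ^ 2 := by
    intro i j
    have := Matrix.IsSymm.apply hsym i j
    rw [sq]; rw [this]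
  set c : Fin n → Fin n → ℝ := fun i j => (if i = j then (1 : ℝ) else 0) - l * a i j with hc'
  have hrw : (∑ i, h i i) - l * ∑ i, ∑ j, a i j * h i j
      = ∑ i, ∑ j, c i j * h i j := by
    have hthis : ∀ i : Fin n, ∑ j, c i j * h i j = h i i - ∑ j, l * (a i j * h i j) := by
      intro i
      simp only [hc', sub_mul, Finset.sum_sub_distrib, ite_mul, one_mul, zero_mul]
      congr 1
      · simp
      · exact Finset.sum_congr rfl fun j _ => by ring
    rw [Finset.sum_congr rfl fun i _ => hthis i, Finset.sum_sub_distrib]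
    congr 1
    rw [Finset.mul_sum]
    exact Finset.sum_congr rfl fun i _ => by rw [Finset.mul_sum]
  have hcs : (∑ i, ∑ j, c i j * h i j) ^ 2
      ≤ (∑ i, ∑ j, c i j ^ 2) * (∑ i, ∑ j, h i j ^ 2) := by
    have := Finset.sum_mul_sq_le_sq_mul_sq Finset.univ
      (fun p : Fin n × Fin n => c p.1 p.2) (fun p : Fin n × Fin n => h p.1 p.2)
    simpa [← Finset.univ_product_univ, Finset.sum_product] using this
  have hcsum : (∑ i, ∑ j, c i j ^ 2) = (n : ℝ) - 2 * l * s + l ^ 2 * t := by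
    have expand : ∀ i j : Fin n, c i j ^ 2
        = (if i = j then (1 : ℝ) else 0) - 2 * l * ((if i = j then (1 : ℝ) else 0) * a i j)
          + l ^ 2 * a i j ^ 2 := by
      intro i j
      by_cases hij : i = j <;> simp [hc', hij] <;> ring
    have e1 : (∑ i : Fin n, ∑ j : Fin n, if i = j then (1 : ℝ) else 0) = (n : ℝ) := by
      simp
    have e2 : (∑ i : Fin n, ∑ j : Fin n, (if i = j then (1 : ℝ) else 0) * a i j) = s := by
      rw [htrace]
      exact Finset.sum_congr rfl fun i _ => by simp
    have e3 : (∑ i, ∑ j, (a i j) ^ 2) = t := by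
      rw [ht2]
      exact Finset.sum_congr rfl fun i _ => Finset.sum_congr rfl fun j _ => (hsq i j).symm
    calc (∑ i, ∑ j, c i j ^ 2)
        = ∑ i : Fin n, ∑ j : Fin n, ((if i = j then (1 : ℝ) else 0)
            - 2 * l * ((if i = j then (1 : ℝ) else 0) * a i j) + l ^ 2 * a i j ^ 2) :=
          Finset.sum_congr rfl fun i _ => Finset.sum_congr rfl fun j _ => expand i j
      _ = (∑ i : Fin n, ∑ j : Fin n, if i = j then (1 : ℝ) else 0)
            - 2 * l * (∑ i : Fin n, ∑ j : Fin n, (if i = j then (1 : ℝ) else 0) * a i j)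
            + l ^ 2 * (∑ i, ∑ j, (a i j) ^ 2) := by
          simp only [Finset.sum_add_distrib, Finset.sum_sub_distrib, ← Finset.mul_sum]
      _ = (n : ℝ) - 2 * l * s + l ^ 2 * t := by rw [e1, e2, e3]
  have hbound : (n : ℝ) - 2 * l * s + l ^ 2 * t ≤ 1 - ε := by
    have hl2 : l = s / t := hl
    have hst : ((n : ℝ) - 1 + ε) ≤ s ^ 2 / t := (le_div_iff₀ ht).2 (by linarith [hc])
    have : (n : ℝ) - 2 * l * s + l ^ 2 * t = (n : ℝ) - s ^ 2 / t := by
      rw [hl2]; field_simp; ring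
    linarith
  have hsum_nonneg : (0 : ℝ) ≤ ∑ i, ∑ j, h i j ^ 2 :=
    Finset.sum_nonneg fun i _ => Finset.sum_nonneg fun j _ => sq_nonneg _
  calc ((∑ i, h i i) - l * ∑ i, ∑ j, a i j * h i j) ^ 2
      = (∑ i, ∑ j, c i j * h i j) ^ 2 := by rw [hrw]
    _ ≤ (∑ i, ∑ j, c i j ^ 2) * (∑ i, ∑ j, h i j ^ 2) := hcs
    _ ≤ (1 - ε) * ∑ i, ∑ j, h i j ^ 2 := by
        apply mul_le_mul_of_nonneg_right _ hsum_nonneg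
        rw [hcsum]; exact hbound

end Stmt15Aux

open Stmt15Aux in
/-- Contraction property of the Cordès-preconditioned residual: for smooth
compactly supported `u` and a symmetric coefficient field `A` satisfying the
Cordès bound `(tr A)² ≥ (n − 1 + ε) tr(A²)` (with `tr(A²) > 0`) a.e., and
`λ(x) = tr(A(x))/tr(A(x)²)`, one has
`‖Δu − λ (A : D²u)‖_{L²} ≤ √(1−ε) ‖Δu‖_{L²}`. -/
theorem stmt15 {n : ℕ} (u : EuclideanSpace ℝ (Fin n) → ℝ)
    (hu : ContDiff ℝ (⊤ : ℕ∞) u) (hsupp : HasCompactSupport u)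
    (A : EuclideanSpace ℝ (Fin n) → Matrix (Fin n) (Fin n) ℝ)
    (ε : ℝ) (hε : 0 < ε) (hε1 : ε ≤ 1)
    (hsym : ∀ᵐ x ∂volume, (A x).IsSymm)
    (hcordes : ∀ᵐ x ∂volume,
      (A x).trace ^ 2 ≥ (n - 1 + ε) * ((A x) * (A x)).trace ∧
      0 < ((A x) * (A x)).trace)
    (lam : EuclideanSpace ℝ (Fin n) → ℝ)
    (hlam : ∀ x, lam x = (A x).trace / ((A x) * (A x)).trace) :
    Real.sqrt (∫ x, ((∑ i, pd i (pd i u) x) -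
        lam x * ∑ i, ∑ j, A x i j * pd j (pd i u) x) ^ 2 ∂volume) ≤
      Real.sqrt (1 - ε) *
        Real.sqrt (∫ x, (∑ i, pd i (pd i u) x) ^ 2 ∂volume) := by
  classical
  have hε0 : (0 : ℝ) ≤ 1 - ε := by linarith
  set S : EuclideanSpace ℝ (Fin n) → ℝ := fun x => ∑ i, ∑ j, (pd j (pd i u) x) ^ 2 with hSdef
  have hS_int : Integrable S volume := by
    apply integrable_finset_sum _ fun i _ => integrable_finset_sum _ fun j _ => ?_
    simp only [sq]; exact
      (((pd_contDiff (pd_contDiff hu i) j).continuous).mul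
          (pd_contDiff (pd_contDiff hu i) j).continuous).integrable_of_hasCompactSupport
        ((pd_hcs (pd_hcs hsupp i) j).mul_right)
  have hpt : ∀ᵐ x ∂volume,
      ((∑ i, pd i (pd i u) x) - lam x * ∑ i, ∑ j, A x i j * pd j (pd i u) x) ^ 2
        ≤ (1 - ε) * S x := by
    filter_upwards [hsym, hcordes] with x hx1 hx2
    exact pointwise_bound (A x) (fun i j => pd j (pd i u) x) ε (lam x) hx1 hx2.1 hx2.2 (hlam x)
  have h1 : (∫ x, ((∑ i, pd i (pd i u) x) -
        lam x * ∑ i, ∑ j, A x i j * pd j (pd i u) x) ^ 2 ∂volume)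
      ≤ ∫ x, (1 - ε) * S x ∂volume :=
    integral_mono_of_nonneg (Filter.Eventually.of_forall fun x => sq_nonneg _)
      (hS_int.const_mul _) hpt
  have h2 : (∫ x, (1 - ε) * S x ∂volume) = (1 - ε) * ∫ x, S x ∂volume :=
    integral_const_mul _ _
  have h3 : (∫ x, S x ∂volume) = ∫ x, (∑ i, pd i (pd i u) x) ^ 2 ∂volume :=
    (hessian_identity u hu hsupp).symm
  calc Real.sqrt (∫ x, ((∑ i, pd i (pd i u) x) -
        lam x * ∑ i, ∑ j, A x i j * pd j (pd i u) x) ^ 2 ∂volume)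
      ≤ Real.sqrt ((1 - ε) * ∫ x, (∑ i, pd i (pd i u) x) ^ 2 ∂volume) := by
        apply Real.sqrt_le_sqrt
        rw [← h3, ← h2]; exact h1
    _ = Real.sqrt (1 - ε) * Real.sqrt (∫ x, (∑ i, pd i (pd i u) x) ^ 2 ∂volume) :=
        Real.sqrt_mul hε0 _

end
end
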